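/- arXiv:2106.02718 — 3 statements merged into one kernel-verified Lean document; each statement's English description precedes it below -/
import Mathlib

section
/- Let V be a real inner product space with two inner products ⟨·,·⟩_N and ⟨·,·⟩_E (with associated seminorms ‖·‖_N, ‖·‖_E), let ρ, n, N > 0, and let ε̂, ε̃ ∈ V satisfy: (i) nN⟨x − ε̂, g⟩_N = ρ⟨ε̂, g⟩_E for all g ∈ V, and (ii) ⟨x − ε̃, g⟩_N = 0 for all g ∈ V, for some fixed x. Then ‖ε̂‖_E ≤ ‖ε̃‖_E. -/
/-- Cauchy–Schwarz for a symmetric positive semidefinite bilinear form. -/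
lemma cs_semidef {V : Type*} [AddCommGroup V] [Module ℝ V]
    (B : V →ₗ[ℝ] V →ₗ[ℝ] ℝ) (hsymm : ∀ u v : V, B u v = B v u)
    (hpos : ∀ v : V, 0 ≤ B v v) (u v : V) :
    B u v * B u v ≤ B u u * B v v := by
  have h : ∀ t : ℝ, 0 ≤ B v v * (t * t) + (2 * B u v) * t + B u u := by
    intro t
    have h0 := hpos (u + t • v)
    simp only [map_add, map_smul, LinearMap.add_apply, LinearMap.smul_apply,
      smul_eq_mul] at h0
    rw [hsymm v u] at h0
    have he : B v v * (t * t) + 2 * B u v * t + B u u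
        = B u u + t * B u v + t * (B u v + t * B v v) := by ring
    rw [he]; exact h0
  have hd := discrim_le_zero h
  simp only [discrim] at hd
  nlinarith

/-- The penalized projection has smaller energy seminorm than the unpenalized one:
if `nN⟨x − ε̂, g⟩_N = ρ⟨ε̂, g⟩_E` for all `g` and `⟨x − ε̃, g⟩_N = 0` for all `g`,
with `⟨·,·⟩_N`, `⟨·,·⟩_E` symmetric positive semidefinite bilinear forms and
`ρ, n, N > 0`, then `‖ε̂‖_E ≤ ‖ε̃‖_E`. -/
theorem penalized_projection_energy_le
    {V : Type*} [AddCommGroup V] [Module ℝ V]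
    (BN BE : V →ₗ[ℝ] V →ₗ[ℝ] ℝ)
    (hBNsymm : ∀ u v : V, BN u v = BN v u) (hBEsymm : ∀ u v : V, BE u v = BE v u)
    (hBNpos : ∀ v : V, 0 ≤ BN v v) (hBEpos : ∀ v : V, 0 ≤ BE v v)
    (ρ n N : ℝ) (hρ : 0 < ρ) (hn : 0 < n) (hN : 0 < N)
    (x εhat εtil : V)
    (hpen : ∀ g : V, n * N * BN (x - εhat) g = ρ * BE εhat g)
    (hunpen : ∀ g : V, BN (x - εtil) g = 0) :
    Real.sqrt (BE εhat εhat) ≤ Real.sqrt (BE εtil εtil) := by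
  set g := εtil - εhat
  have h1 := hpen g
  have h2 := hunpen g
  -- nN * BN g g = ρ * (BE εhat εtil - BE εhat εhat)
  have hgg : n * N * BN g g = ρ * BE εhat g := by
    have hdiff : BN g g = BN (x - εhat) g - BN (x - εtil) g := by
      rw [← LinearMap.sub_apply, ← map_sub]
      congr 2
      show g = (x - εhat) - (x - εtil)
      simp only [g]; abel
    rw [hdiff, h2, sub_zero]
    exact h1
  have hkey : BE εhat εhat ≤ BE εhat εtil := by
    have hρpos : 0 ≤ ρ * BE εhat g := by
      rw [← hgg]
      exact mul_nonneg (mul_nonneg hn.le hN.le) (hBNpos g)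
    have : 0 ≤ BE εhat g := nonneg_of_mul_nonneg_right hρpos hρ
    have hexp : BE εhat g = BE εhat εtil - BE εhat εhat := by
      simp [g, map_sub]
    linarith [hexp ▸ this]
  have hcs := cs_semidef BE hBEsymm hBEpos εhat εtil
  have ha := hBEpos εhat
  have hb := hBEpos εtil
  have h3 : BE εhat εhat * BE εhat εhat ≤ BE εhat εhat * BE εtil εtil := by
    nlinarith
  rcases eq_or_lt_of_le ha with h0 | h0
  · rw [← h0, Real.sqrt_zero]; exact Real.sqrt_nonneg _
  · have : BE εhat εhat ≤ BE εtil εtil := le_of_mul_le_mul_left (by linarith) h0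
    exact Real.sqrt_le_sqrt this
end

section
/- In the setting of the previous lemma, suppose additionally there is a constant S̄ > 0 such that ‖g‖_E ≤ S̄ ‖g‖_N for all g ∈ V. Then ‖ε̃ − ε̂‖_N ≤ (ρ/(nN)) S̄ ‖ε̃‖_E. -/
/-- Cauchy–Schwarz for a symmetric positive semidefinite bilinear form. -/
lemma psd_cauchy_schwarz {V : Type*} [AddCommGroup V] [Module ℝ V]
    (B : V →ₗ[ℝ] V →ₗ[ℝ] ℝ) (hsymm : ∀ u v : V, B u v = B v u)
    (hpos : ∀ v : V, 0 ≤ B v v) (u v : V) :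
    B u v ≤ Real.sqrt (B u u) * Real.sqrt (B v v) := by
  have hdisc : discrim (B v v) (2 * B u v) (B u u) ≤ 0 := by
    apply discrim_le_zero
    intro t
    have h := hpos (u + t • v)
    have hexp : B (u + t • v) (u + t • v)
        = B v v * t ^ 2 + 2 * B u v * t + B u u := by
      simp [map_add, map_smul, LinearMap.add_apply, LinearMap.smul_apply,
        hsymm v u]
      ring
    linarith [hexp ▸ h]
  have hsq : (B u v) ^ 2 ≤ B u u * B v v := by
    unfold discrim at hdisc; nlinarith
  have := Real.sqrt_le_sqrt hsq
  calc B u v ≤ |B u v| := le_abs_self _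
    _ = Real.sqrt ((B u v) ^ 2) := by rw [Real.sqrt_sq_eq_abs]
    _ ≤ Real.sqrt (B u u * B v v) := Real.sqrt_le_sqrt hsq
    _ = Real.sqrt (B u u) * Real.sqrt (B v v) :=
        Real.sqrt_mul (hpos u) _

/-- In the setting of the penalized/unpenalized projections, if moreover
`‖g‖_E ≤ S̄ ‖g‖_N` for all `g ∈ V`, then `‖ε̃ − ε̂‖_N ≤ (ρ/(nN)) S̄ ‖ε̃‖_E`. -/
theorem penalized_projection_empirical_distance_bound
    {V : Type*} [AddCommGroup V] [Module ℝ V]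
    (BN BE : V →ₗ[ℝ] V →ₗ[ℝ] ℝ)
    (hBNsymm : ∀ u v : V, BN u v = BN v u) (hBEsymm : ∀ u v : V, BE u v = BE v u)
    (hBNpos : ∀ v : V, 0 ≤ BN v v) (hBEpos : ∀ v : V, 0 ≤ BE v v)
    (ρ n N : ℝ) (hρ : 0 < ρ) (hn : 0 < n) (hN : 0 < N)
    (Sbar : ℝ) (hSbar : 0 < Sbar)
    (hratio : ∀ g : V, Real.sqrt (BE g g) ≤ Sbar * Real.sqrt (BN g g))
    (x εhat εtil : V)
    (hpen : ∀ g : V, n * N * BN (x - εhat) g = ρ * BE εhat g)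
    (hunpen : ∀ g : V, BN (x - εtil) g = 0) :
    Real.sqrt (BN (εtil - εhat) (εtil - εhat)) ≤
      ρ / (n * N) * Sbar * Real.sqrt (BE εtil εtil) := by
  set d := εtil - εhat with hd
  have hnN : 0 < n * N := mul_pos hn hN
  -- key identity : nN * BN d d = ρ * BE εhat d
  have hkey : n * N * BN d d = ρ * BE εhat d := by
    have h1 := hpen d
    have h2 := hunpen d
    have h3 : BN (x - εhat) d = BN (x - εtil) d + BN d d := by
      have : (x - εhat) = (x - εtil) + d := by rw [hd]; abel
      rw [this, map_add, LinearMap.add_apply]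
    rw [h3, h2, zero_add] at h1
    exact h1
  -- BE εhat d ≤ BE εtil d
  have hle1 : BE εhat d ≤ BE εtil d := by
    have : BE εtil d - BE εhat d = BE d d := by
      simp only [hd, map_sub, LinearMap.sub_apply]
      ring
    linarith [hBEpos d]
  have hcsE : BE εtil d ≤ Real.sqrt (BE εtil εtil) * Real.sqrt (BE d d) :=
    psd_cauchy_schwarz BE hBEsymm hBEpos _ _
  have hratio' : Real.sqrt (BE d d) ≤ Sbar * Real.sqrt (BN d d) := hratio d
  set s := Real.sqrt (BN d d) with hs
  have hsnn : 0 ≤ s := Real.sqrt_nonneg _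
  have hEnn : 0 ≤ Real.sqrt (BE εtil εtil) := Real.sqrt_nonneg _
  have hBNd : BN d d = s ^ 2 := (Real.sq_sqrt (hBNpos d)).symm
  -- chain
  have hchain : n * N * s ^ 2 ≤ ρ * (Real.sqrt (BE εtil εtil) * (Sbar * s)) := by
    rw [← hBNd, hkey]
    have h1 : BE εhat d ≤ Real.sqrt (BE εtil εtil) * (Sbar * s) := by
      calc BE εhat d ≤ BE εtil d := hle1
        _ ≤ Real.sqrt (BE εtil εtil) * Real.sqrt (BE d d) := hcsE
        _ ≤ Real.sqrt (BE εtil εtil) * (Sbar * s) := by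
            apply mul_le_mul_of_nonneg_left hratio' hEnn
    exact mul_le_mul_of_nonneg_left h1 hρ.le
  rcases eq_or_lt_of_le hsnn with h0 | h0
  · rw [← h0]
    positivity
  · rw [div_mul_eq_mul_div, div_mul_eq_mul_div, le_div_iff₀ hnN]
    nlinarith
end

section
/- Let {g₁, g₂} be functions with expansions g_l(z) = Σ_{m∈M} γ_{l,m} B_m(z), and suppose: (a) there are constants 0 < c ≤ C with c h² Σ_m γ_{l,m}² ≤ ‖g_l‖² ≤ C h² Σ_m γ_{l,m}² for l = 1,2 (norm equivalence with mesh parameter h), and (b) max_{m,m′} |⟨B_m, B_{m′}⟩_N − ⟨B_m, B_{m′}⟩| ≤ ε, where only at most K pairs (m,m′) have B_m B_{m′} not identically zero for each m. Then |⟨g₁, g₂⟩_N − ⟨g₁, g₂⟩| ≤ (K ε / (c h²)) ‖g₁‖ ‖g₂‖. -/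
/-!
The difference of the two inner products is bilinear in the coefficients, so it equals
`∑ γ₁ m γ₂ m' D m m'` with `D` the Gram error matrix of the basis. Local support makes `D` vanish
off `S`, and a Schur-type estimate (Cauchy–Schwarz over `S`, each index lying in at most `K`
pairs of `S` in either coordinate) bounds the sum by `K ε ‖γ₁‖ ‖γ₂‖`. The lower norm equivalence
converts `‖γ_l‖` into `‖g_l‖ / √(c h²)`.
-/

open MeasureTheory Finset

section Sparse

variable {α β : Type*}

theorem sum_comp_le_mul_sum_of_card_fiber_le [DecidableEq β] [Fintype β] (S : Finset α)
    (π : α → β) {f : β → ℝ} (hf : ∀ b, 0 ≤ f b) {K : ℕ}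
    (hK : ∀ b, #{a ∈ S | π a = b} ≤ K) :
    ∑ a ∈ S, f (π a) ≤ K * ∑ b, f b := by
  rw [sum_comp, mul_sum]
  calc ∑ b ∈ S.image π, #{a ∈ S | π a = b} • f b
      ≤ ∑ b ∈ S.image π, K * f b :=
        sum_le_sum fun b _ => by
          rw [nsmul_eq_mul]; exact mul_le_mul_of_nonneg_right (by exact_mod_cast hK b) (hf b)
    _ ≤ ∑ b, K * f b :=
        sum_le_sum_of_subset_of_nonneg (subset_univ _) fun b _ _ => mul_nonneg K.cast_nonneg (hf b)

theorem card_filter_snd_eq_card_filter_fst [DecidableEq α] {S : Finset (α × α)}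
    (hsymm : ∀ a b, (a, b) ∈ S → (b, a) ∈ S) (a : α) :
    #{p ∈ S | p.2 = a} = #{p ∈ S | p.1 = a} :=
  card_nbij' Prod.swap Prod.swap
    (fun _ hp => mem_filter.2 ⟨hsymm _ _ (mem_filter.1 hp).1, (mem_filter.1 hp).2⟩)
    (fun _ hp => mem_filter.2 ⟨hsymm _ _ (mem_filter.1 hp).1, (mem_filter.1 hp).2⟩)
    (fun _ _ => rfl) (fun _ _ => rfl)

theorem abs_sum_sum_mul_le_of_sparse [Fintype α] [DecidableEq α] {A : α → α → ℝ} {ε : ℝ}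
    (hε : 0 ≤ ε) (hA : ∀ a b, |A a b| ≤ ε) {S : Finset (α × α)}
    (hS : ∀ a b, (a, b) ∉ S → A a b = 0) (hsymm : ∀ a b, (a, b) ∈ S → (b, a) ∈ S) {K : ℕ}
    (hK : ∀ a, #{p ∈ S | p.1 = a} ≤ K) (x y : α → ℝ) :
    |∑ a, ∑ b, x a * y b * A a b| ≤
      K * ε * Real.sqrt (∑ a, x a ^ 2) * Real.sqrt (∑ b, y b ^ 2) := by
  have hsum_S : ∑ a, ∑ b, x a * y b * A a b = ∑ p ∈ S, x p.1 * y p.2 * A p.1 p.2 := by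
    rw [← Fintype.sum_prod_type']
    exact (sum_subset (subset_univ S) fun p _ hp => by simp [hS p.1 p.2 hp]).symm
  have hx : ∑ p ∈ S, x p.1 ^ 2 ≤ K * ∑ a, x a ^ 2 :=
    sum_comp_le_mul_sum_of_card_fiber_le S Prod.fst (fun _ => sq_nonneg _) hK
  have hy : ∑ p ∈ S, y p.2 ^ 2 ≤ K * ∑ b, y b ^ 2 :=
    sum_comp_le_mul_sum_of_card_fiber_le S Prod.snd (fun _ => sq_nonneg _)
      fun a => (card_filter_snd_eq_card_filter_fst hsymm a).trans_le (hK a)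
  calc |∑ a, ∑ b, x a * y b * A a b|
      ≤ ∑ p ∈ S, |x p.1| * |y p.2| * ε := by
        rw [hsum_S]
        refine (abs_sum_le_sum_abs _ _).trans (sum_le_sum fun p _ => ?_)
        rw [abs_mul, abs_mul]
        exact mul_le_mul_of_nonneg_left (hA _ _) (by positivity)
    _ ≤ Real.sqrt (∑ p ∈ S, x p.1 ^ 2) * Real.sqrt (∑ p ∈ S, y p.2 ^ 2) * ε := by
        rw [← sum_mul]
        refine mul_le_mul_of_nonneg_right ?_ hε
        simpa only [sq_abs] using Real.sum_mul_le_sqrt_mul_sqrt S (|x ·.1|) (|y ·.2|)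
    _ ≤ Real.sqrt (K * ∑ a, x a ^ 2) * Real.sqrt (K * ∑ b, y b ^ 2) * ε := by
        gcongr
    _ = K * ε * Real.sqrt (∑ a, x a ^ 2) * Real.sqrt (∑ b, y b ^ 2) := by
        rw [Real.sqrt_mul K.cast_nonneg, Real.sqrt_mul K.cast_nonneg]
        linear_combination (Real.sqrt (∑ a, x a ^ 2) * Real.sqrt (∑ b, y b ^ 2) * ε) *
          Real.mul_self_sqrt (K.cast_nonneg : (0 : ℝ) ≤ K)

end Sparse

theorem sqrt_mul_sqrt_le_div_of_mul_le {a s₁ s₂ t₁ t₂ : ℝ} (ha : 0 < a) (h₁ : a * s₁ ≤ t₁)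
    (h₂ : a * s₂ ≤ t₂) :
    Real.sqrt s₁ * Real.sqrt s₂ ≤ Real.sqrt t₁ * Real.sqrt t₂ / a := by
  have hs : ∀ {s t : ℝ}, a * s ≤ t → Real.sqrt s ≤ Real.sqrt t / Real.sqrt a := fun h => by
    rw [← Real.sqrt_div' _ ha.le]
    exact Real.sqrt_le_sqrt ((le_div_iff₀' ha).2 h)
  calc Real.sqrt s₁ * Real.sqrt s₂
      ≤ Real.sqrt t₁ / Real.sqrt a * (Real.sqrt t₂ / Real.sqrt a) :=
        mul_le_mul (hs h₁) (hs h₂) (Real.sqrt_nonneg _) (by positivity)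
    _ = Real.sqrt t₁ * Real.sqrt t₂ / a := by
        rw [div_mul_div_comm, Real.mul_self_sqrt ha.le]

section InnerDefect

variable {Ω M : Type*} [MeasurableSpace Ω] (μ : Measure Ω) {N : ℕ} (zs : Fin N → Ω)

noncomputable def innerDefect (f g : Ω → ℝ) : ℝ :=
  (1 / (N : ℝ)) * ∑ j, f (zs j) * g (zs j) - ∫ z, f z * g z ∂μ

theorem innerDefect_eq_zero_of_mul_eq_zero {f g : Ω → ℝ} (h : ∀ z, f z * g z = 0) :
    innerDefect μ zs f g = 0 := by
  simp [innerDefect, h]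

theorem innerDefect_sum_mul_sum [Fintype M] {B : M → Ω → ℝ}
    (hint : ∀ m m', Integrable (fun z => B m z * B m' z) μ) (γ₁ γ₂ : M → ℝ) :
    innerDefect μ zs (fun z => ∑ m, γ₁ m * B m z) (fun z => ∑ m, γ₂ m * B m z) =
      ∑ m, ∑ m', γ₁ m * γ₂ m' * innerDefect μ zs (B m) (B m') := by
  have hprod : ∀ z, (∑ m, γ₁ m * B m z) * (∑ m, γ₂ m * B m z) =
      ∑ m, ∑ m', γ₁ m * γ₂ m' * (B m z * B m' z) := fun z => by
    rw [Fintype.sum_mul_sum]; simp only [mul_mul_mul_comm]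
  have hint' : ∀ m m', Integrable (fun z => γ₁ m * γ₂ m' * (B m z * B m' z)) μ :=
    fun m m' => (hint m m').const_mul _
  have hemp : (1 / (N : ℝ)) * ∑ j, ∑ m, ∑ m', γ₁ m * γ₂ m' * (B m (zs j) * B m' (zs j)) =
      ∑ m, ∑ m', γ₁ m * γ₂ m' * ((1 / (N : ℝ)) * ∑ j, B m (zs j) * B m' (zs j)) := by
    simp only [mul_sum]
    rw [sum_comm]
    refine sum_congr rfl fun m _ => ?_
    rw [sum_comm]
    exact sum_congr rfl fun m' _ => sum_congr rfl fun j _ => by ring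
  have hintegral : ∫ z, ∑ m, ∑ m', γ₁ m * γ₂ m' * (B m z * B m' z) ∂μ =
      ∑ m, ∑ m', γ₁ m * γ₂ m' * ∫ z, B m z * B m' z ∂μ := by
    rw [integral_finsetSum _ fun m _ => integrable_finsetSum _ fun m' _ => hint' m m']
    simp only [integral_finsetSum _ fun m' _ => hint' _ m', integral_const_mul]
  simp only [innerDefect, hprod, hemp, hintegral, ← sum_sub_distrib, ← mul_sub]

end InnerDefect

theorem empirical_inner_product_approximation_general
    {M Ω : Type*} [Fintype M] [DecidableEq M] [MeasurableSpace Ω]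
    (μ : Measure Ω) (B : M → Ω → ℝ)
    (hint : ∀ m m' : M, Integrable (fun z => B m z * B m' z) μ)
    (N : ℕ) (zs : Fin N → Ω)
    (γ₁ γ₂ : M → ℝ) (g₁ g₂ : Ω → ℝ)
    (hg₁ : g₁ = fun z => ∑ m, γ₁ m * B m z)
    (hg₂ : g₂ = fun z => ∑ m, γ₂ m * B m z)
    (c h : ℝ) (hc : 0 < c) (hh : 0 < h)
    (hlow₁ : c * h ^ 2 * ∑ m, γ₁ m ^ 2 ≤ ∫ z, (g₁ z) ^ 2 ∂μ)
    (hlow₂ : c * h ^ 2 * ∑ m, γ₂ m ^ 2 ≤ ∫ z, (g₂ z) ^ 2 ∂μ)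
    (ε : ℝ) (hε : 0 ≤ ε)
    (hgram : ∀ m m' : M,
      |(1 / (N : ℝ)) * ∑ j, B m (zs j) * B m' (zs j) - ∫ z, B m z * B m' z ∂μ| ≤ ε)
    (S : Finset (M × M))
    (hsupp : ∀ m m' : M, (m, m') ∉ S → ∀ z : Ω, B m z * B m' z = 0)
    (hsymm : ∀ m m' : M, (m, m') ∈ S → (m', m) ∈ S)
    (K : ℕ) (hK : ∀ m : M, (S.filter (fun p => p.1 = m)).card ≤ K) :
    |(1 / (N : ℝ)) * ∑ j, g₁ (zs j) * g₂ (zs j) - ∫ z, g₁ z * g₂ z ∂μ| ≤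
      (K : ℝ) * ε / (c * h ^ 2) *
        Real.sqrt (∫ z, (g₁ z) ^ 2 ∂μ) * Real.sqrt (∫ z, (g₂ z) ^ 2 ∂μ) := by
  have hsparse : ∀ m m', (m, m') ∉ S → innerDefect μ zs (B m) (B m') = 0 :=
    fun m m' hmm' => innerDefect_eq_zero_of_mul_eq_zero μ zs (hsupp m m' hmm')
  have hexpand : innerDefect μ zs g₁ g₂ =
      ∑ m, ∑ m', γ₁ m * γ₂ m' * innerDefect μ zs (B m) (B m') := by
    rw [hg₁, hg₂]; exact innerDefect_sum_mul_sum μ zs hint γ₁ γ₂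
  calc |innerDefect μ zs g₁ g₂|
      ≤ K * ε * Real.sqrt (∑ m, γ₁ m ^ 2) * Real.sqrt (∑ m, γ₂ m ^ 2) :=
        hexpand ▸ abs_sum_sum_mul_le_of_sparse hε hgram hsparse hsymm hK γ₁ γ₂
    _ ≤ K * ε *
          (Real.sqrt (∫ z, (g₁ z) ^ 2 ∂μ) * Real.sqrt (∫ z, (g₂ z) ^ 2 ∂μ) / (c * h ^ 2)) := by
        rw [mul_assoc]
        gcongr
        exact sqrt_mul_sqrt_le_div_of_mul_le (by positivity) hlow₁ hlow₂
    _ = _ := by ring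

/-- Core deterministic estimate for the empirical vs theoretical inner product:
if `g_l = Σ_m γ_{l,m} B_m`, the norm equivalence `c h² ‖γ_l‖² ≤ ‖g_l‖² ≤ C h² ‖γ_l‖²`
holds, the basis Gram entries satisfy `|⟨B_m,B_{m′}⟩_N − ⟨B_m,B_{m′}⟩| ≤ ε`, and the
basis has local support (products vanish off a symmetric set `S` with at most `K`
partners per index), then `|⟨g₁,g₂⟩_N − ⟨g₁,g₂⟩| ≤ (Kε/(c h²)) ‖g₁‖ ‖g₂‖`. -/
theorem empirical_inner_product_approximation
    {M Ω : Type*} [Fintype M] [DecidableEq M] [MeasurableSpace Ω]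
    (μ : Measure Ω) (B : M → Ω → ℝ)
    (hint : ∀ m m' : M, Integrable (fun z => B m z * B m' z) μ)
    (N : ℕ) (hN : 0 < N) (zs : Fin N → Ω)
    (γ₁ γ₂ : M → ℝ) (g₁ g₂ : Ω → ℝ)
    (hg₁ : g₁ = fun z => ∑ m, γ₁ m * B m z)
    (hg₂ : g₂ = fun z => ∑ m, γ₂ m * B m z)
    (c C h : ℝ) (hc : 0 < c) (hcC : c ≤ C) (hh : 0 < h)
    (hlow₁ : c * h ^ 2 * ∑ m, γ₁ m ^ 2 ≤ ∫ z, (g₁ z) ^ 2 ∂μ)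
    (hhigh₁ : (∫ z, (g₁ z) ^ 2 ∂μ) ≤ C * h ^ 2 * ∑ m, γ₁ m ^ 2)
    (hlow₂ : c * h ^ 2 * ∑ m, γ₂ m ^ 2 ≤ ∫ z, (g₂ z) ^ 2 ∂μ)
    (hhigh₂ : (∫ z, (g₂ z) ^ 2 ∂μ) ≤ C * h ^ 2 * ∑ m, γ₂ m ^ 2)
    (ε : ℝ) (hε : 0 ≤ ε)
    (hgram : ∀ m m' : M,
      |(1 / (N : ℝ)) * ∑ j, B m (zs j) * B m' (zs j) - ∫ z, B m z * B m' z ∂μ| ≤ ε)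
    (S : Finset (M × M))
    (hsupp : ∀ m m' : M, (m, m') ∉ S → ∀ z : Ω, B m z * B m' z = 0)
    (hsymm : ∀ m m' : M, (m, m') ∈ S → (m', m) ∈ S)
    (K : ℕ) (hK : ∀ m : M, (S.filter (fun p => p.1 = m)).card ≤ K) :
    |(1 / (N : ℝ)) * ∑ j, g₁ (zs j) * g₂ (zs j) - ∫ z, g₁ z * g₂ z ∂μ| ≤
      (K : ℝ) * ε / (c * h ^ 2) *
        Real.sqrt (∫ z, (g₁ z) ^ 2 ∂μ) * Real.sqrt (∫ z, (g₂ z) ^ 2 ∂μ) :=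
  empirical_inner_product_approximation_general μ B hint N zs γ₁ γ₂ g₁ g₂ hg₁ hg₂ c h hc hh hlow₁
    hlow₂ ε hε hgram S hsupp hsymm K hK
end
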